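/- arXiv:1305.5128 — 4 statements merged into one kernel-verified Lean document; each statement's English description precedes it below -/
import Mathlib

section
/- Under the hypotheses making σ^{σ_j} defined (indices i < j with σ_i < σ_j, all entries before position i greater than σ_j, all entries strictly between positions i and j less than σ_i, and σ 132-avoiding), one necessarily has σ_j = σ_i + 1. -/
/-- A permutation `σ` of `{0,…,n-1}` is 132-avoiding if there are no indices
`a < b < c` with `σ a < σ c < σ b`. -/
def Avoids132 {n : ℕ} (σ : Equiv.Perm (Fin n)) : Prop :=
  ¬ ∃ a b c : Fin n, a < b ∧ b < c ∧ σ a < σ c ∧ σ c < σ b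

/-- `s` is an occurrence of the pattern `τ` in `σ`: a strictly increasing choice of
positions whose values are order-isomorphic to `τ`. -/
def IsOccurrence {k n : ℕ} (τ : Equiv.Perm (Fin k)) (σ : Equiv.Perm (Fin n))
    (s : Fin k → Fin n) : Prop :=
  StrictMono s ∧ ∀ a b : Fin k, σ (s a) < σ (s b) ↔ τ a < τ b

/-- The number of occurrences of the pattern `τ` in `σ`. -/
noncomputable def numOcc {k n : ℕ} (τ : Equiv.Perm (Fin k)) (σ : Equiv.Perm (Fin n)) : ℕ :=
  Nat.card {s : Fin k → Fin n // IsOccurrence τ σ s}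

open scoped Classical in
/-- `pop n τ` is `A_n(τ)`: the total number of occurrences of the pattern `τ`
over all 132-avoiding permutations of length `n`. -/
noncomputable def pop (n : ℕ) {k : ℕ} (τ : Equiv.Perm (Fin k)) : ℕ :=
  ∑ σ : Equiv.Perm (Fin n), if Avoids132 σ then numOcc τ σ else 0

/-- The move `σ^{σ_j}` is defined at positions `i < j`. -/
def MoveAt {n : ℕ} (σ : Equiv.Perm (Fin n)) (i j : Fin n) : Prop :=
  i < j ∧ σ i < σ j ∧ (∀ a : Fin n, a < i → σ j < σ a) ∧
    (∀ b : Fin n, i < b → b < j → σ b < σ i)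

/-- `φ = σ^{σ_j}`: the move is defined at `i < j` and `φ` is obtained from `σ` by removing
the entry at position `j` and reinserting it immediately before position `i`. -/
def IsShift {n : ℕ} (σ φ : Equiv.Perm (Fin n)) (i j : Fin n) : Prop :=
  MoveAt σ i j ∧
  (∀ t : Fin n, t < i → φ t = σ t) ∧ φ i = σ j ∧
  (∀ t : Fin n, i ≤ t → ∀ h : t < j,
    φ ⟨(t : ℕ) + 1, Nat.lt_of_le_of_lt (Nat.succ_le_of_lt (Fin.lt_def.mp h)) j.isLt⟩ = σ t) ∧
  (∀ t : Fin n, j < t → φ t = σ t)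

/-- The pattern 213 (zero-indexed one-line notation 1,0,2). -/
def p213 : Equiv.Perm (Fin 3) := Equiv.swap 0 1
/-- The pattern 231 (zero-indexed one-line notation 1,2,0). -/
def p231 : Equiv.Perm (Fin 3) := finRotate 3
/-- The pattern 312 (zero-indexed one-line notation 2,0,1). -/
def p312 : Equiv.Perm (Fin 3) := (finRotate 3)⁻¹
/-- The pattern 3241 (zero-indexed one-line notation 2,1,3,0). -/
def p3241 : Equiv.Perm (Fin 4) := ⟨![2,1,3,0], ![3,1,0,2], by decide, by decide⟩
/-- The pattern 3421 (zero-indexed one-line notation 2,3,1,0). -/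
def p3421 : Equiv.Perm (Fin 4) := ⟨![2,3,1,0], ![3,2,0,1], by decide, by decide⟩
/-- The pattern 324, order-isomorphic to 213. -/
def p324 : Equiv.Perm (Fin 3) := Equiv.swap 0 1
/-- The pattern 342, order-isomorphic to 231. -/
def p342 : Equiv.Perm (Fin 3) := finRotate 3
/-- The decreasing pattern of length 2. -/
def p21 : Equiv.Perm (Fin 2) := Equiv.swap 0 1
/-- The increasing pattern of length 2. -/
def p12 : Equiv.Perm (Fin 2) := 1
/-- The single-letter pattern. -/
def p1 : Equiv.Perm (Fin 1) := 1

/-- `Cm m = |S_m(132)|`, the number of 132-avoiding permutations of length `m`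
(the `m`-th Catalan number). -/
noncomputable def Cm (m : ℕ) : ℕ := Nat.card {σ : Equiv.Perm (Fin m) // Avoids132 σ}

/-- Fuelled construction of the binary tree of a sequence: root at the maximum entry,
left/right subtrees built recursively from the parts left/right of the maximum. -/
def toTreeAux : ℕ → List ℕ → Tree Unit
  | 0, _ => Tree.nil
  | _ + 1, [] => Tree.nil
  | fuel + 1, l =>
    let m := l.idxOf (l.foldr max 0)
    Tree.node () (toTreeAux fuel (l.take m)) (toTreeAux fuel (l.drop (m + 1)))

/-- The (unlabelled) binary tree associated to a sequence of distinct naturals. -/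
def toTree (l : List ℕ) : Tree Unit := toTreeAux l.length l

/-- The binary tree `T(σ)` associated to a permutation `σ`. -/
def treeOf {n : ℕ} (σ : Equiv.Perm (Fin n)) : Tree Unit :=
  toTree (List.ofFn fun i => (σ i : ℕ))

/-- Labelled version of `toTreeAux`, storing the value at each vertex. -/
def toTreeLAux : ℕ → List ℕ → Tree ℕ
  | 0, _ => Tree.nil
  | _ + 1, [] => Tree.nil
  | fuel + 1, l =>
    let m := l.idxOf (l.foldr max 0)
    Tree.node (l.foldr max 0) (toTreeLAux fuel (l.take m)) (toTreeLAux fuel (l.drop (m + 1)))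

/-- The labelled binary tree associated to a sequence of distinct naturals. -/
def toTreeL (l : List ℕ) : Tree ℕ := toTreeLAux l.length l

/-- The labelled binary tree `T(σ)` associated to a permutation `σ`, vertices
labelled by the values of `σ`. -/
def treeOfL {n : ℕ} (σ : Equiv.Perm (Fin n)) : Tree ℕ :=
  toTreeL (List.ofFn fun i => (σ i : ℕ))

/-- `spineAux t = (r, S)` where `r` is the number of vertices on the spine through the
root of `t` (following right children) and `S` is the multiset of sizes of all the
other spines (components after deleting all left-child edges). -/
def spineAux {α : Type*} : Tree α → ℕ × Multiset ℕ
  | BinaryTree.nil => (0, 0)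
  | BinaryTree.node _ L R =>
    let aL := spineAux L
    let aR := spineAux R
    (aR.1 + 1, (if aL.1 = 0 then aL.2 else aL.1 ::ₘ aL.2) + aR.2)

/-- The spine structure of a binary tree: the multiset of sizes of the connected
components obtained after deleting every edge joining a left child to its parent. -/
def spineStructure {α : Type*} (t : Tree α) : Multiset ℕ :=
  let a := spineAux t
  if a.1 = 0 then a.2 else a.1 ::ₘ a.2

/-- `RefinementLE b a` means `b ≤_R a` in refinement order: `a` can be obtained from `b`
by merging (nonempty) subsets of its parts. -/
def RefinementLE (b a : Multiset ℕ) : Prop :=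
  ∃ P : Multiset (Multiset ℕ), (∀ m ∈ P, m ≠ 0) ∧ P.sum = b ∧ P.map Multiset.sum = a

/-- The label of the root of a labelled tree, if any. -/
def rootLabel? : Tree ℕ → Option ℕ
  | BinaryTree.nil => none
  | BinaryTree.node v _ _ => some v

/-- `IsParent t p c`: in the labelled tree `t`, the vertex labelled `p` is the parent of
the vertex labelled `c`. -/
def IsParent : Tree ℕ → ℕ → ℕ → Prop
  | BinaryTree.nil, _, _ => False
  | BinaryTree.node v L R, p, c =>
      (p = v ∧ (rootLabel? L = some c ∨ rootLabel? R = some c)) ∨ IsParent L p c ∨ IsParent R p c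

/-! No value lies strictly between `σ i` and `σ j`: entries before position `i` exceed `σ j`,
entries strictly between `i` and `j` are below `σ i`, and an entry after `j` with such a value
would complete a 132 pattern with the entries at `i` and `j`. -/

theorem MoveAt.covBy {n : ℕ} {σ : Equiv.Perm (Fin n)} {i j : Fin n} (hσ : Avoids132 σ)
    (h : MoveAt σ i j) : σ i ⋖ σ j := by
  obtain ⟨hij, hlt, hbefore, hbetween⟩ := h
  refine ⟨hlt, fun v hiv hvj => ?_⟩
  obtain ⟨k, rfl⟩ := σ.surjective v
  rcases lt_trichotomy k i with hki | rfl | hik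
  · exact (hbefore k hki).asymm hvj
  · exact hiv.false
  rcases lt_trichotomy k j with hkj | rfl | hjk
  · exact (hbetween k hik hkj).asymm hiv
  · exact hvj.false
  · exact hσ ⟨i, j, k, hij, hjk, hiv, hvj⟩

/-- when the move `σ^{σ_j}` is defined, `σ_j = σ_i + 1`. -/
theorem shift_val_succ {n : ℕ} (σ : Equiv.Perm (Fin n)) (i j : Fin n)
    (hσ : Avoids132 σ) (h : MoveAt σ i j) : (σ j : ℕ) = (σ i : ℕ) + 1 :=
  (Nat.covBy_iff_add_one_eq.mp (Fin.covBy_iff.mp (h.covBy hσ))).symm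
end

section
/- For every n ≥ 3, the popularities of the three patterns 213, 231, 312 among 132-avoiding permutations of length n are equal: A_n(213) = A_n(231) = A_n(312). -/
/-!
In one-line notation a 132-avoiding permutation of length `n + 1` is uniquely `α (n) β`, where
`α` and `β` avoid 132 and every entry of `α` exceeds every entry of `β`. Counting occurrences of
213 and 231 across this decomposition expresses their generating functions `𝒫` and `𝒬` through
those of the Catalan numbers `𝒞`, of `n Cₙ` (`𝒟`) and of the patterns 21 and 12 (`ℐ`, `𝒥`): each
`𝒮` of `𝒟, ℐ, 𝒥, 𝒫, 𝒬` satisfies `(1 - 2X𝒞) 𝒮 = X · (…)`. Eliminating `ℐ`, `𝒥` and `𝒟` gives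
`(1 - 2X𝒞)² 𝒫 = X²𝒞𝒟(𝒞 + 𝒟) = (1 - 2X𝒞)² 𝒬`, hence `𝒫 = 𝒬`. The patterns 231 and 312 are
inverse to each other, and `σ ↦ σ⁻¹` preserves 132-avoidance and exchanges their occurrences.
-/

open Equiv Finset

section Occurrences

variable {k n : ℕ}

theorem isOccurrence_iff (τ : Perm (Fin k)) (σ : Perm (Fin n)) (s : Fin k → Fin n) :
    IsOccurrence τ σ s ↔ StrictMono s ∧ StrictMono (σ ∘ s ∘ ⇑τ⁻¹) := by
  refine and_congr_right fun _ => ⟨fun h x y hxy => ?_, fun h a b => ?_⟩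
  · simpa [h] using hxy
  · simpa using h.lt_iff_lt (a := τ a) (b := τ b)

theorem numOcc_inv (τ : Perm (Fin k)) (σ : Perm (Fin n)) : numOcc τ⁻¹ σ⁻¹ = numOcc τ σ := by
  refine Nat.card_congr
    { toFun := fun t => ⟨⇑σ⁻¹ ∘ t.1 ∘ τ, ?_⟩
      invFun := fun s => ⟨σ ∘ s.1 ∘ ⇑τ⁻¹, ?_⟩
      left_inv := fun t => by ext; simp
      right_inv := fun s => by ext; simp }
  · obtain ⟨h₁, h₂⟩ := (isOccurrence_iff _ _ _).1 t.2
    refine (isOccurrence_iff _ _ _).2 ⟨?_, ?_⟩ <;> simpa [Function.comp_def]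
  · obtain ⟨h₁, h₂⟩ := (isOccurrence_iff _ _ _).1 s.2
    refine (isOccurrence_iff _ _ _).2 ⟨?_, ?_⟩ <;> simpa [Function.comp_def]

theorem Fintype.sum_fun_fin_succ {α M : Type*} [Fintype α] [AddCommMonoid M]
    (f : (Fin (k + 1) → α) → M) : ∑ s, f s = ∑ x, ∑ s : Fin k → α, f (Matrix.vecCons x s) := by
  rw [← (Fin.consEquiv fun _ => α).sum_comp, Fintype.sum_prod_type]
  rfl

open scoped Classical in
theorem numOcc_eq_sum (τ : Perm (Fin k)) (σ : Perm (Fin n)) :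
    numOcc τ σ = ∑ s, if IsOccurrence τ σ s then 1 else 0 := by
  rw [numOcc, Nat.card_eq_fintype_card, Fintype.card_subtype, card_filter]

variable (σ : Perm (Fin n))

theorem numOcc_p21 : numOcc p21 σ = ∑ i, ∑ j, if i < j ∧ σ j < σ i then 1 else 0 := by
  simp only [numOcc_eq_sum, Fintype.sum_fun_fin_succ, Fintype.sum_unique]
  simp [isOccurrence_iff, Fin.strictMono_iff_lt_succ, p21]

theorem numOcc_p12 : numOcc p12 σ = ∑ i, ∑ j, if i < j ∧ σ i < σ j then 1 else 0 := by
  simp only [numOcc_eq_sum, Fintype.sum_fun_fin_succ, Fintype.sum_unique]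
  simp [isOccurrence_iff, Fin.strictMono_iff_lt_succ, p12]

theorem numOcc_p213 :
    numOcc p213 σ = ∑ i, ∑ j, ∑ k, if i < j ∧ j < k ∧ σ j < σ i ∧ σ i < σ k then 1 else 0 := by
  simp only [numOcc_eq_sum, Fintype.sum_fun_fin_succ, Fintype.sum_unique]
  simp [isOccurrence_iff, Fin.strictMono_iff_lt_succ, p213, Fin.forall_fin_two, and_assoc]

theorem numOcc_p231 :
    numOcc p231 σ = ∑ i, ∑ j, ∑ k, if i < j ∧ j < k ∧ σ k < σ i ∧ σ i < σ j then 1 else 0 := by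
  simp only [numOcc_eq_sum, Fintype.sum_fun_fin_succ, Fintype.sum_unique]
  simp [isOccurrence_iff, Fin.strictMono_iff_lt_succ, p231, Fin.forall_fin_two,
    show (-1 : Fin 3) = 2 from rfl, and_assoc]

theorem avoids132_iff_sum : Avoids132 σ ↔
    ∑ i, ∑ j, ∑ k, (if i < j ∧ j < k ∧ σ i < σ k ∧ σ k < σ j then 1 else 0) = 0 := by
  simp only [Avoids132, not_exists, sum_eq_zero_iff, mem_univ, forall_const, ite_eq_right_iff,
    one_ne_zero, imp_false]

theorem avoids132_inv_iff : Avoids132 σ⁻¹ ↔ Avoids132 σ := by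
  suffices ∀ σ : Perm (Fin n), Avoids132 σ → Avoids132 σ⁻¹ from
    ⟨fun h => by simpa using this _ h, this σ⟩
  rintro σ hσ ⟨x, y, z, hxy, hyz, hxz, hzy⟩
  exact hσ ⟨σ⁻¹ x, σ⁻¹ z, σ⁻¹ y, hxz, hzy, by simpa using hxy, by simpa using hyz⟩

end Occurrences

open scoped Classical in
theorem pop_inv {k : ℕ} (n : ℕ) (τ : Perm (Fin k)) : pop n τ⁻¹ = pop n τ :=
  Fintype.sum_equiv (Equiv.inv _) _ _ fun σ => by
    simp [avoids132_inv_iff, ← numOcc_inv τ⁻¹ σ]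

section Blocks

variable {a b : ℕ}

def posL (i : Fin a) : Fin (a + 1 + b) := Fin.castAdd b (Fin.castAdd 1 i)
def posM : Fin (a + 1 + b) := Fin.castAdd b (Fin.natAdd a 0)
def posR (j : Fin b) : Fin (a + 1 + b) := Fin.natAdd (a + 1) j

theorem sum_univ_posL_posM_posR {M : Type*} [AddCommMonoid M] (f : Fin (a + 1 + b) → M) :
    ∑ x, f x = ∑ i, f (posL i) + f posM + ∑ j, f (posR j) := by
  simp only [Fin.sum_univ_add, Fin.sum_univ_one, posL, posM, posR]

theorem posL_posM_posR_cases (x : Fin (a + 1 + b)) :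
    (∃ i, x = posL i) ∨ x = posM ∨ ∃ j, x = posR j := by
  induction x using Fin.addCases with
  | left y =>
    induction y using Fin.addCases with
    | left i => exact .inl ⟨i, rfl⟩
    | right z => exact .inr (.inl (by rw [Fin.fin_one_eq_zero z]; rfl))
  | right j => exact .inr (.inr ⟨j, rfl⟩)

variable (i j : Fin a) (k l : Fin b)

@[simp] theorem val_posL : (posL i : Fin (a + 1 + b)).val = i := rfl
@[simp] theorem val_posM : (posM : Fin (a + 1 + b)).val = a := rfl
@[simp] theorem val_posR : (posR k : Fin (a + 1 + b)).val = a + 1 + k := rfl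

@[simp] theorem posL_lt_posL_iff : (posL i : Fin (a + 1 + b)) < posL j ↔ i < j := Iff.rfl
@[simp] theorem posR_lt_posR_iff : (posR k : Fin (a + 1 + b)) < posR l ↔ k < l := by
  rw [Fin.lt_iff_val_lt_val, Fin.lt_iff_val_lt_val, val_posR, val_posR]
  omega
@[simp] theorem posL_lt_posM : (posL i : Fin (a + 1 + b)) < posM := i.isLt
@[simp] theorem posM_lt_posR : (posM : Fin (a + 1 + b)) < posR k := by
  rw [Fin.lt_iff_val_lt_val, val_posM, val_posR]
  omega
@[simp] theorem posL_lt_posR : (posL i : Fin (a + 1 + b)) < posR k :=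
  (posL_lt_posM i).trans (posM_lt_posR k)
@[simp] theorem not_posM_lt_posL : ¬ (posM : Fin (a + 1 + b)) < posL i := (posL_lt_posM i).asymm
@[simp] theorem not_posR_lt_posM : ¬ (posR k : Fin (a + 1 + b)) < posM := (posM_lt_posR k).asymm
@[simp] theorem not_posR_lt_posL : ¬ (posR k : Fin (a + 1 + b)) < posL i :=
  (posL_lt_posR i k).asymm

end Blocks

section Glue

variable {a b : ℕ}

/-- In one-line notation `glueMax α β = (α + b) (a + b) β`. -/
def glueMax (α : Perm (Fin a)) (β : Perm (Fin b)) : Perm (Fin (a + 1 + b)) :=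
  (finSumFinEquiv.symm.trans (finSumFinEquiv.symm.sumCongr (Equiv.refl (Fin b)))).trans <|
    ((sumCongr (sumCongr α (Equiv.refl (Fin 1))) β).trans
      ((finSumFinEquiv.sumCongr (Equiv.refl (Fin b))).trans
        ((sumComm _ _).trans (finSumFinEquiv.trans (finCongr (add_comm b (a + 1)))))))

variable (α : Perm (Fin a)) (β : Perm (Fin b)) (i j : Fin a) (k l : Fin b)

@[simp] theorem val_glueMax_posL : (glueMax α β (posL i) : ℕ) = b + α i := by
  simp [glueMax, posL, add_comm]
@[simp] theorem val_glueMax_posM : (glueMax α β posM : ℕ) = a + b := by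
  simp [glueMax, posM]
@[simp] theorem val_glueMax_posR : (glueMax α β (posR k) : ℕ) = β k := by
  simp [glueMax, posR]

@[simp] theorem glueMax_posL_lt_posL_iff :
    glueMax α β (posL i) < glueMax α β (posL j) ↔ α i < α j := by
  rw [Fin.lt_iff_val_lt_val, Fin.lt_iff_val_lt_val, val_glueMax_posL, val_glueMax_posL]
  omega
@[simp] theorem glueMax_posR_lt_posR_iff :
    glueMax α β (posR k) < glueMax α β (posR l) ↔ β k < β l := by
  rw [Fin.lt_iff_val_lt_val, Fin.lt_iff_val_lt_val, val_glueMax_posR, val_glueMax_posR]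
@[simp] theorem glueMax_posL_lt_posM : glueMax α β (posL i) < glueMax α β posM := by
  rw [Fin.lt_iff_val_lt_val, val_glueMax_posL, val_glueMax_posM]
  omega
@[simp] theorem glueMax_posR_lt_posL : glueMax α β (posR k) < glueMax α β (posL i) := by
  rw [Fin.lt_iff_val_lt_val, val_glueMax_posL, val_glueMax_posR]
  omega
@[simp] theorem glueMax_posR_lt_posM : glueMax α β (posR k) < glueMax α β posM := by
  rw [Fin.lt_iff_val_lt_val, val_glueMax_posR, val_glueMax_posM]
  omega
@[simp] theorem not_glueMax_posM_lt_posL : ¬ glueMax α β posM < glueMax α β (posL i) :=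
  (glueMax_posL_lt_posM α β i).asymm
@[simp] theorem not_glueMax_posL_lt_posR : ¬ glueMax α β (posL i) < glueMax α β (posR k) :=
  (glueMax_posR_lt_posL α β i k).asymm
@[simp] theorem not_glueMax_posM_lt_posR : ¬ glueMax α β posM < glueMax α β (posR k) :=
  (glueMax_posR_lt_posM α β k).asymm

theorem avoids132_glueMax_iff : Avoids132 (glueMax α β) ↔ Avoids132 α ∧ Avoids132 β := by
  simp only [avoids132_iff_sum, sum_univ_posL_posM_posR]
  simp

theorem numOcc_p21_glueMax :
    numOcc p21 (glueMax α β) = numOcc p21 α + a * b + b + numOcc p21 β := by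
  simp only [numOcc_p21, sum_univ_posL_posM_posR]
  simp [sum_add_distrib]

theorem numOcc_p12_glueMax : numOcc p12 (glueMax α β) = numOcc p12 α + a + numOcc p12 β := by
  simp only [numOcc_p12, sum_univ_posL_posM_posR]
  simp [sum_add_distrib]

theorem numOcc_p213_glueMax :
    numOcc p213 (glueMax α β) = numOcc p213 α + numOcc p21 α + numOcc p213 β := by
  simp only [numOcc_p213, numOcc_p21, sum_univ_posL_posM_posR]
  simp [sum_add_distrib]

theorem numOcc_p231_glueMax :
    numOcc p231 (glueMax α β) = numOcc p231 α + numOcc p12 α * b + a * b + numOcc p231 β := by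
  simp only [numOcc_p231, numOcc_p12, sum_univ_posL_posM_posR, sum_mul, ite_mul, one_mul, zero_mul]
  simp [sum_add_distrib]

theorem glueMax_inj {α' : Perm (Fin a)} {β' : Perm (Fin b)} :
    glueMax α β = glueMax α' β' ↔ α = α' ∧ β = β' := by
  refine ⟨fun h => ⟨?_, ?_⟩, fun h => h.1 ▸ h.2 ▸ rfl⟩ <;> ext x
  · simpa using congrArg (fun σ : Perm (Fin (a + 1 + b)) => (σ (posL x) : ℕ)) h
  · simpa using congrArg (fun σ : Perm (Fin (a + 1 + b)) => (σ (posR x) : ℕ)) h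

end Glue

section Decomposition

variable {a b : ℕ} {σ : Perm (Fin (a + 1 + b))}

theorem lt_apply_posM {x : Fin (a + 1 + b)} (hmax : (σ posM : ℕ) = a + b) (hx : x ≠ posM) :
    σ x < σ posM := by
  have := Fin.val_ne_of_ne (σ.injective.ne hx)
  rw [Fin.lt_iff_val_lt_val, hmax]
  omega

theorem apply_posR_lt_apply_posL (hσ : Avoids132 σ) (hmax : (σ posM : ℕ) = a + b)
    (i : Fin a) (k : Fin b) : σ (posR k) < σ (posL i) := by
  refine lt_of_le_of_ne (not_lt.1 fun h => hσ ⟨posL i, posM, posR k, by simp, by simp, h, ?_⟩)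
    (σ.injective.ne (posL_lt_posR i k).ne')
  exact lt_apply_posM hmax (posM_lt_posR k).ne'

theorem val_apply_posR_lt (hσ : Avoids132 σ) (hmax : (σ posM : ℕ) = a + b) (k : Fin b) :
    (σ (posR k) : ℕ) < b := by
  have hmaps : Set.MapsTo σ.symm (Iic (σ (posR k)) : Finset _)
      (Ioi posM : Finset (Fin (a + 1 + b))) := by
    intro w hw
    simp only [coe_Iic, coe_Ioi, Set.mem_Iic, Set.mem_Ioi] at hw ⊢
    obtain ⟨i, hi⟩ | hM | ⟨j, hj⟩ := posL_posM_posR_cases (σ.symm w)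
    · have := apply_posR_lt_apply_posL hσ hmax i k
      rw [← hi, apply_symm_apply] at this
      exact absurd hw this.not_ge
    · have := lt_apply_posM hmax (posM_lt_posR k).ne'
      rw [← hM, apply_symm_apply] at this
      exact absurd hw this.not_ge
    · simp [hj]
  have := card_le_card_of_injOn _ hmaps σ.symm.injective.injOn
  rw [Fin.card_Iic, Fin.card_Ioi, val_posM] at this
  omega

theorem le_val_apply_posL (hσ : Avoids132 σ) (hmax : (σ posM : ℕ) = a + b) (i : Fin a) :
    b ≤ (σ (posL i) : ℕ) := by
  have hmaps : Set.MapsTo σ.symm (Ici (σ (posL i)) : Finset _)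
      (Iic posM : Finset (Fin (a + 1 + b))) := by
    intro w hw
    simp only [coe_Ici, coe_Iic, Set.mem_Ici, Set.mem_Iic] at hw ⊢
    obtain ⟨l, hl⟩ | hM | ⟨k, hk⟩ := posL_posM_posR_cases (σ.symm w)
    · simp [hl, le_of_lt]
    · simp [hM]
    · have := apply_posR_lt_apply_posL hσ hmax i k
      rw [← hk, apply_symm_apply] at this
      exact absurd hw this.not_ge
  have := card_le_card_of_injOn _ hmaps σ.symm.injective.injOn
  rw [Fin.card_Ici, Fin.card_Iic, val_posM] at this
  omega

theorem exists_glueMax_eq (hσ : Avoids132 σ) (hmax : (σ posM : ℕ) = a + b) :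
    ∃ α β, glueMax α β = σ := by
  have hα : ∀ i, (σ (posL i) : ℕ) - b < a := fun i => by
    have := lt_apply_posM hmax (posL_lt_posM i).ne
    rw [Fin.lt_iff_val_lt_val, hmax] at this
    have := i.pos
    omega
  let α : Perm (Fin a) := .ofBijective (fun i => ⟨σ (posL i) - b, hα i⟩) <|
    Finite.injective_iff_bijective.1 fun i j h => by
      have := le_val_apply_posL hσ hmax i
      have := le_val_apply_posL hσ hmax j
      have := Fin.mk.inj h
      have hij : σ (posL i) = σ (posL j) := Fin.ext (by omega)
      simpa [Fin.ext_iff] using σ.injective hij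
  let β : Perm (Fin b) := .ofBijective (fun k => ⟨σ (posR k), val_apply_posR_lt hσ hmax k⟩) <|
    Finite.injective_iff_bijective.1 fun k l h => by
      have hkl : σ (posR k) = σ (posR l) := Fin.ext (Fin.mk.inj h)
      simpa [Fin.ext_iff] using σ.injective hkl
  refine ⟨α, β, Equiv.ext fun x => Fin.ext ?_⟩
  obtain ⟨i, rfl⟩ | rfl | ⟨k, rfl⟩ := posL_posM_posR_cases x
  · have := le_val_apply_posL hσ hmax i
    simp only [val_glueMax_posL, ofBijective_apply, α]
    omega
  · simp [hmax]
  · simp [β]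

end Decomposition

section Sums

theorem apply_permCongr_finCongr {M : Sort*} (F : ∀ {m : ℕ}, Perm (Fin m) → M) {m m' : ℕ}
    (h : m = m') (σ : Perm (Fin m)) : F ((finCongr h).permCongr σ) = F σ := by
  subst h
  congr

theorem permCongr_glueMax_apply {a b n : ℕ} (h : a + 1 + b = n + 1) (α : Perm (Fin a))
    (β : Perm (Fin b)) : (finCongr h).permCongr (glueMax α β) ⟨a, by omega⟩ = Fin.last n := by
  have : (finCongr h).symm ⟨a, by omega⟩ = posM := rfl
  ext
  rw [permCongr_apply, this, finCongr_apply, Fin.val_cast, val_glueMax_posM, Fin.val_last]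
  omega

theorem exists_permCongr_glueMax_eq {n : ℕ} {σ : Perm (Fin (n + 1))} (hσ : Avoids132 σ) :
    ∃ (a b : ℕ) (h : a + 1 + b = n + 1) (α : Perm (Fin a)) (β : Perm (Fin b)),
      Avoids132 α ∧ Avoids132 β ∧ (finCongr h).permCongr (glueMax α β) = σ := by
  set a := (σ⁻¹ (Fin.last n) : ℕ)
  have hab : a + 1 + (n - a) = n + 1 := by have := (σ⁻¹ (Fin.last n)).is_le; omega
  set σ' := (finCongr hab.symm).permCongr σ
  have hσ' : Avoids132 σ' := by rwa [apply_permCongr_finCongr (fun σ => Avoids132 σ)]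
  have hmax : (σ' posM : ℕ) = a + (n - a) := by
    have : finCongr hab posM = σ⁻¹ (Fin.last n) := Fin.ext rfl
    simp only [σ', permCongr_apply, finCongr_symm, this, Perm.coe_inv, apply_symm_apply,
      finCongr_apply, Fin.val_cast, Fin.val_last]
    omega
  obtain ⟨α, β, hαβ⟩ := exists_glueMax_eq hσ' hmax
  obtain ⟨hα, hβ⟩ := (avoids132_glueMax_iff α β).1 (hαβ ▸ hσ')
  refine ⟨a, n - a, hab, α, β, hα, hβ, ?_⟩
  ext x
  simp [hαβ, σ', permCongr_apply]

open scoped Classical in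
noncomputable def avoiders132 (n : ℕ) : Finset (Perm (Fin n)) := univ.filter Avoids132

@[simp] theorem mem_avoiders132 {n : ℕ} {σ : Perm (Fin n)} :
    σ ∈ avoiders132 n ↔ Avoids132 σ := by
  simp [avoiders132]

theorem pop_eq_sum_avoiders132 {k : ℕ} (n : ℕ) (τ : Perm (Fin k)) :
    pop n τ = ∑ σ ∈ avoiders132 n, numOcc τ σ := by
  rw [pop, avoiders132, sum_filter]

theorem sum_avoiders132_succ {M : Type*} [AddCommMonoid M] (F : ∀ {m : ℕ}, Perm (Fin m) → M)
    (n : ℕ) : ∑ σ ∈ avoiders132 (n + 1), F σ =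
      ∑ p ∈ antidiagonal n, ∑ α ∈ avoiders132 p.1, ∑ β ∈ avoiders132 p.2, F (glueMax α β) := by
  rw [sum_congr rfl fun (p : ℕ × ℕ) _ => (sum_product' (avoiders132 p.1) (avoiders132 p.2)
    fun α β => F (glueMax α β)).symm, sum_sigma']
  symm
  refine sum_bij (fun x hx =>
      (finCongr (by simp at hx; omega : x.1.1 + 1 + x.1.2 = n + 1)).permCongr
        (glueMax x.2.1 x.2.2)) ?_ ?_ ?_ ?_
  · rintro ⟨⟨a, b⟩, α, β⟩ hx
    simp only [mem_sigma, mem_product, mem_avoiders132] at hx ⊢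
    rw [apply_permCongr_finCongr (fun σ => Avoids132 σ), avoids132_glueMax_iff]
    exact hx.2
  · rintro ⟨⟨a, b⟩, α, β⟩ hx ⟨⟨a', b'⟩, α', β'⟩ hx' h
    simp only [mem_sigma, HasAntidiagonal.mem_antidiagonal] at hx hx'
    obtain rfl : a = a' := by
      have := (permCongr_glueMax_apply (by omega : a + 1 + b = n + 1) α β).trans
        (permCongr_glueMax_apply (by omega : a' + 1 + b' = n + 1) α' β').symm
      rw [h] at this
      exact Fin.mk.inj (Equiv.injective _ this)
    obtain rfl : b = b' := by omega
    obtain ⟨rfl, rfl⟩ := glueMax_inj α β |>.1 ((finCongr _).permCongr.injective h)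
    rfl
  · intro σ hσ
    obtain ⟨a, b, h, α, β, hα, hβ, rfl⟩ := exists_permCongr_glueMax_eq (mem_avoiders132.1 hσ)
    refine ⟨⟨(a, b), α, β⟩, ?_, rfl⟩
    simp only [mem_sigma, mem_product, mem_avoiders132, HasAntidiagonal.mem_antidiagonal]
    exact ⟨by omega, hα, hβ⟩
  · rintro ⟨⟨a, b⟩, α, β⟩ hx
    exact (apply_permCongr_finCongr F _ _).symm

end Sums

section Series

open PowerSeries

noncomputable def avoiders132Series (F : ∀ {m : ℕ}, Perm (Fin m) → ℕ) : PowerSeries ℤ :=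
  mk fun n => ∑ σ ∈ avoiders132 n, (F σ : ℤ)

theorem coeff_avoiders132Series_mul (F G : ∀ {m : ℕ}, Perm (Fin m) → ℕ) (n : ℕ) :
    coeff n (avoiders132Series F * avoiders132Series G) =
      ∑ p ∈ antidiagonal n, ∑ α ∈ avoiders132 p.1, ∑ β ∈ avoiders132 p.2, (F α * G β : ℤ) := by
  simp [coeff_mul, avoiders132Series, sum_mul_sum]

theorem avoiders132Series_eq_X_mul {F : ∀ {m : ℕ}, Perm (Fin m) → ℕ} {S : PowerSeries ℤ}
    (h₀ : ∀ σ : Perm (Fin 0), F σ = 0)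
    (hS : ∀ n, coeff n S = ∑ p ∈ antidiagonal n, ∑ α ∈ avoiders132 p.1, ∑ β ∈ avoiders132 p.2,
      (F (glueMax α β) : ℤ)) :
    avoiders132Series F = X * S := by
  ext (_ | n)
  · simp [avoiders132Series, h₀]
  · rw [coeff_succ_X_mul, hS, avoiders132Series, coeff_mk]
    exact sum_avoiders132_succ (fun σ => (F σ : ℤ)) n

local notation "𝒞" => avoiders132Series fun _ => 1
local notation "𝒟" => avoiders132Series fun {m} _ => m
local notation "ℐ" => avoiders132Series fun σ => numOcc p21 σ
local notation "𝒥" => avoiders132Series fun σ => numOcc p12 σ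
local notation "𝒫" => avoiders132Series fun σ => numOcc p213 σ
local notation "𝒬" => avoiders132Series fun σ => numOcc p231 σ

theorem avoiders132Series_length : 𝒟 = X * (𝒟 * 𝒞 + 𝒞 * 𝒟 + 𝒞 * 𝒞) := by
  refine avoiders132Series_eq_X_mul (fun _ => rfl) fun n => ?_
  simp only [map_add, coeff_avoiders132Series_mul, ← sum_add_distrib]
  refine sum_congr rfl fun p _ => sum_congr rfl fun α _ => sum_congr rfl fun β _ => ?_
  push_cast
  ring

theorem avoiders132Series_p21 : ℐ = X * (ℐ * 𝒞 + 𝒞 * ℐ + 𝒟 * 𝒟 + 𝒞 * 𝒟) := by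
  refine avoiders132Series_eq_X_mul (fun σ => by simp [numOcc_p21]) fun n => ?_
  simp only [map_add, coeff_avoiders132Series_mul, ← sum_add_distrib]
  refine sum_congr rfl fun p _ => sum_congr rfl fun α _ => sum_congr rfl fun β _ => ?_
  rw [numOcc_p21_glueMax]
  push_cast
  ring

theorem avoiders132Series_p12 : 𝒥 = X * (𝒥 * 𝒞 + 𝒞 * 𝒥 + 𝒟 * 𝒞) := by
  refine avoiders132Series_eq_X_mul (fun σ => by simp [numOcc_p12]) fun n => ?_
  simp only [map_add, coeff_avoiders132Series_mul, ← sum_add_distrib]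
  refine sum_congr rfl fun p _ => sum_congr rfl fun α _ => sum_congr rfl fun β _ => ?_
  rw [numOcc_p12_glueMax]
  push_cast
  ring

theorem avoiders132Series_p213 : 𝒫 = X * (𝒫 * 𝒞 + 𝒞 * 𝒫 + ℐ * 𝒞) := by
  refine avoiders132Series_eq_X_mul (fun σ => by simp [numOcc_p213]) fun n => ?_
  simp only [map_add, coeff_avoiders132Series_mul, ← sum_add_distrib]
  refine sum_congr rfl fun p _ => sum_congr rfl fun α _ => sum_congr rfl fun β _ => ?_
  rw [numOcc_p213_glueMax]
  push_cast
  ring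

theorem avoiders132Series_p231 : 𝒬 = X * (𝒬 * 𝒞 + 𝒞 * 𝒬 + 𝒥 * 𝒟 + 𝒟 * 𝒟) := by
  refine avoiders132Series_eq_X_mul (fun σ => by simp [numOcc_p231]) fun n => ?_
  simp only [map_add, coeff_avoiders132Series_mul, ← sum_add_distrib]
  refine sum_congr rfl fun p _ => sum_congr rfl fun α _ => sum_congr rfl fun β _ => ?_
  rw [numOcc_p231_glueMax]
  push_cast
  ring

theorem avoiders132Series_p213_eq_p231 : 𝒫 = 𝒬 := by
  set u : PowerSeries ℤ := 1 - 2 * X * 𝒞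
  have hu : u ^ 2 ≠ 0 := pow_ne_zero 2 fun h => by simpa [u] using congrArg constantCoeff h
  refine mul_left_cancel₀ hu ?_
  linear_combination u * avoiders132Series_p213 + X * 𝒞 * avoiders132Series_p21
    - u * avoiders132Series_p231 - X * 𝒟 * avoiders132Series_p12 - X * 𝒟 * avoiders132Series_length

end Series

theorem pop_p213_eq_pop_p231 (n : ℕ) : pop n p213 = pop n p231 := by
  have := congrArg (PowerSeries.coeff n) avoiders132Series_p213_eq_p231
  simp only [avoiders132Series, PowerSeries.coeff_mk] at this
  rw [pop_eq_sum_avoiders132, pop_eq_sum_avoiders132]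
  exact_mod_cast this

theorem pop_213_231_312_general (n : ℕ) :
    pop n p213 = pop n p231 ∧ pop n p231 = pop n p312 :=
  ⟨pop_p213_eq_pop_p231 n, (pop_inv n p231).symm⟩

/-- for `n ≥ 3`, `A_n(213) = A_n(231) = A_n(312)`. -/
theorem pop_213_231_312 (n : ℕ) (hn : 3 ≤ n) :
    pop n p213 = pop n p231 ∧ pop n p231 = pop n p312 :=
  pop_213_231_312_general n
end

section
/- The bijection σ ↦ T(σ) between 132-avoiding permutations of {1,…,n} and binary trees on n vertices has the parent-characterization property: for σ ∈ S_n(132) and any position α with σ_α ≤ n−1, the parent of the vertex labelled σ_α in T(σ) is the vertex labelled σ_β, where σ_β is the least value greater than σ_α such that all entries of σ at positions strictly between β and α (in either order, β < α or β > α) are less than σ_α. -/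
/-!
The root of `T(l)` is the maximum `M` of `l`, and its subtrees are the trees of the parts of `l`
left and right of `M`. By the hypothesis on the entries between `α` and `β`, `M` cannot lie
strictly between them, so either both lie on the same side of `M`, and we recurse, or
`σ_β = M`. In that case `σ_α` is the maximum of its side, hence the root of the corresponding
subtree: otherwise the entry larger than `σ_α` nearest to `α` on that side would be a
candidate smaller than `M`.

Sequences are taken as windows `f a, …, f (b - 1)` of one function `f : ℕ → ℕ`, so that both
sides of the maximum are again windows of `f` and the hypotheses restrict without reindexing.
-/

theorem idxOf_foldr_max_lt_length {l : List ℕ} (hl : l ≠ []) :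
    l.idxOf (l.foldr max 0) < l.length :=
  List.idxOf_lt_length_iff.2 (List.maximum_mem (List.foldr_max_of_ne_nil hl).symm)

theorem toTreeLAux_congr_fuel {fuel₁ fuel₂ : ℕ} {l : List ℕ} (h₁ : l.length ≤ fuel₁)
    (h₂ : l.length ≤ fuel₂) : toTreeLAux fuel₁ l = toTreeLAux fuel₂ l := by
  induction fuel₁ generalizing fuel₂ l with
  | zero =>
    obtain rfl : l = [] := List.eq_nil_of_length_eq_zero (by omega)
    cases fuel₂ <;> rfl
  | succ k ih =>
    match l, fuel₂ with
    | [], 0 | [], _ + 1 => rfl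
    | _ :: _, 0 => simp at h₂
    | x :: xs, k₂ + 1 =>
      have hidx := idxOf_foldr_max_lt_length (List.cons_ne_nil x xs)
      simp only [toTreeLAux]
      congr 1 <;> apply ih <;>
        simp only [List.length_take, List.length_drop, List.length_cons] at h₁ h₂ hidx ⊢ <;>
        omega

theorem toTreeL_eq_node {l : List ℕ} (hl : l ≠ []) :
    toTreeL l = BinaryTree.node (l.foldr max 0) (toTreeL (l.take (l.idxOf (l.foldr max 0))))
      (toTreeL (l.drop (l.idxOf (l.foldr max 0) + 1))) := by
  have hidx := idxOf_foldr_max_lt_length hl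
  obtain ⟨x, xs, rfl⟩ := List.exists_cons_of_ne_nil hl
  show toTreeLAux (xs.length + 1) (x :: xs) = _
  simp only [toTreeLAux]
  congr 1 <;> refine toTreeLAux_congr_fuel ?_ le_rfl <;>
    simp only [List.length_take, List.length_drop, List.length_cons] at hidx ⊢ <;> omega

def window (f : ℕ → ℕ) (a b : ℕ) : List ℕ := (List.range' a (b - a)).map f

section Window

variable {f : ℕ → ℕ} {a b : ℕ}

theorem toTreeL_window {m : ℕ} (hf : Set.InjOn f (Set.Ico a b)) (hm : m ∈ Set.Ico a b)
    (hmax : ∀ i ∈ Set.Ico a b, f i ≤ f m) :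
    toTreeL (window f a b) =
      BinaryTree.node (f m) (toTreeL (window f a m)) (toTreeL (window f (m + 1) b)) := by
  obtain ⟨ham, hmb⟩ := hm
  have hlen : m - a < (window f a b).length := by
    simp only [window, List.length_map, List.length_range']; omega
  have hget : (window f a b)[m - a] = f m := by
    simp only [window, List.getElem_map, List.getElem_range', one_mul]
    congr
    omega
  have hmem : ∀ x ∈ List.range' a (b - a), x ∈ Set.Ico a b := fun x hx => by
    rw [List.mem_range'] at hx; simp only [Set.mem_Ico]; omega
  have hnodup : (window f a b).Nodup :=
    List.Nodup.map_on (fun x hx y hy => hf (hmem x hx) (hmem y hy)) (List.nodup_range' _)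
  have hfold : (window f a b).foldr max 0 = f m := by
    refine le_antisymm (List.max_le_of_forall_le _ _ ?_) (List.le_max_of_le ?_ le_rfl)
    · simp only [window, List.mem_map]
      rintro _ ⟨x, hx, rfl⟩
      exact hmax x (hmem x hx)
    · exact hget ▸ List.getElem_mem _
  have hidx : (window f a b).idxOf (f m) = m - a := hget ▸ hnodup.idxOf_getElem _ _
  rw [toTreeL_eq_node (List.ne_nil_of_mem (hfold ▸ List.mem_of_getElem hget)), hfold, hidx]
  simp only [window, ← List.map_take, ← List.map_drop,
    List.take_range'_of_length_ge (by omega : m - a ≤ b - a), List.drop_range']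
  congr 4 <;> omega

theorem rootLabel?_toTreeL_window {m : ℕ} (hf : Set.InjOn f (Set.Ico a b))
    (hm : m ∈ Set.Ico a b) (hmax : ∀ i ∈ Set.Ico a b, f i ≤ f m) :
    rootLabel? (toTreeL (window f a b)) = some (f m) := by
  rw [toTreeL_window hf hm hmax]; rfl

end Window

/-- `f β` is a candidate for the parent of `f α` in the characterization. -/
def Sees (f : ℕ → ℕ) (α β : ℕ) : Prop :=
  f α < f β ∧ ∀ t, min α β < t → t < max α β → f t < f α

section Sees

variable {f : ℕ → ℕ} {a b α β γ : ℕ}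

theorem exists_sees_of_lt (hf : Set.InjOn f (Set.Ico a b)) (hα : α ∈ Set.Ico a b)
    (hγ : γ ∈ Set.Ico a b) (hlt : f α < f γ) :
    ∃ δ, min α γ ≤ δ ∧ δ ≤ max α γ ∧ Sees f α δ := by
  obtain ⟨δ, hδ, hδmin⟩ :=
    ((Finset.Icc (min α γ) (max α γ)).filter (f α < f ·)).exists_min_image (Nat.dist · α)
      ⟨γ, by simp [hlt]⟩
  simp only [Finset.mem_filter, Finset.mem_Icc] at hδ hδmin
  obtain ⟨⟨hδ₁, hδ₂⟩, hδlt⟩ := hδ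
  refine ⟨δ, hδ₁, hδ₂, hδlt, fun t ht₁ ht₂ => ?_⟩
  have hnot : ¬ f α < f t := fun h => by
    have := hδmin t ⟨⟨by omega, by omega⟩, h⟩
    simp only [Nat.dist] at this
    omega
  have hne : f t ≠ f α := fun h => by
    have := hf (by simp only [Set.mem_Ico] at hα hγ ⊢; omega) hα h
    omega
  omega

theorem le_of_forall_sees_le (hf : Set.InjOn f (Set.Ico a b)) (hα : α ∈ Set.Ico a b)
    (hβ : β ∈ Set.Ico a b) (hmax : ∀ i ∈ Set.Ico a b, f i ≤ f β)
    (hmin : ∀ β' ∈ Set.Ico a b, Sees f α β' → f β ≤ f β') :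
    ∀ γ ∈ Set.Ico a b, ¬ (min α γ ≤ β ∧ β ≤ max α γ) → f γ ≤ f α := by
  intro γ hγ hsep
  by_contra! hlt
  obtain ⟨δ, hδ₁, hδ₂, hδ⟩ := exists_sees_of_lt hf hα hγ hlt
  have hδI : δ ∈ Set.Ico a b := by simp only [Set.mem_Ico] at hα hγ ⊢; omega
  have := hf hδI hβ (le_antisymm (hmax δ hδI) (hmin δ hδI hδ))
  omega

theorem isParent_toTreeL_window (hf : Set.InjOn f (Set.Ico a b)) (hα : α ∈ Set.Ico a b)
    (hβ : β ∈ Set.Ico a b) (hsees : Sees f α β)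
    (hmin : ∀ β' ∈ Set.Ico a b, Sees f α β' → f β ≤ f β') :
    IsParent (toTreeL (window f a b)) (f β) (f α) := by
  induction hk : b - a using Nat.strong_induction_on generalizing a b with
  | _ k ih =>
  obtain ⟨m, hm, hmax⟩ := (Finset.Ico a b).exists_max_image f ⟨α, Finset.mem_Ico.2 hα⟩
  simp only [Finset.mem_Ico] at hm hmax
  obtain ⟨hα₁, hα₂⟩ := hα
  obtain ⟨hβ₁, hβ₂⟩ := hβ
  have hαm : α ≠ m := by rintro rfl; exact (hmax β ⟨hβ₁, hβ₂⟩).not_gt hsees.1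
  have hm_outside : ¬ (min α β < m ∧ m < max α β) := fun h =>
    (hsees.2 m h.1 h.2).not_ge (hmax α ⟨hα₁, hα₂⟩)
  rw [toTreeL_window hf hm hmax]
  simp only [IsParent]
  rcases lt_trichotomy β m with hβm | rfl | hβm
  · refine Or.inr (Or.inl (ih (m - a) (by omega) (hf.mono (Set.Ico_subset_Ico_right hm.2.le))
      ⟨hα₁, by omega⟩ ⟨hβ₁, hβm⟩ (fun β' ⟨h₁, h₂⟩ => hmin β' ⟨h₁, by omega⟩)
      rfl))
  · refine Or.inl ⟨rfl, ?_⟩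
    have hroot := le_of_forall_sees_le hf ⟨hα₁, hα₂⟩ ⟨hβ₁, hβ₂⟩ hmax hmin
    rcases Nat.lt_or_gt_of_ne hαm with hαβ | hβα
    · exact Or.inl (rootLabel?_toTreeL_window (hf.mono (Set.Ico_subset_Ico_right hβ₂.le))
        ⟨hα₁, hαβ⟩ fun γ ⟨h₁, h₂⟩ => hroot γ ⟨h₁, by omega⟩ (by omega))
    · exact Or.inr (rootLabel?_toTreeL_window (hf.mono (Set.Ico_subset_Ico_left (by omega)))
        ⟨hβα, hα₂⟩ fun γ ⟨h₁, h₂⟩ => hroot γ ⟨by omega, h₂⟩ (by omega))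
  · refine Or.inr (Or.inr (ih (b - (m + 1)) (by omega)
      (hf.mono (Set.Ico_subset_Ico_left (by omega))) ⟨by omega, hα₂⟩ ⟨hβm, hβ₂⟩
      (fun β' ⟨h₁, h₂⟩ => hmin β' ⟨by omega, h₂⟩) rfl))

end Sees

def natExtend {n : ℕ} (v : Fin n → ℕ) (i : ℕ) : ℕ := if h : i < n then v ⟨i, h⟩ else 0

section NatExtend

variable {n : ℕ} (v : Fin n → ℕ)

@[simp]
theorem natExtend_val (i : Fin n) : natExtend v i = v i := by simp [natExtend]

theorem ofFn_eq_window : List.ofFn v = window (natExtend v) 0 n := by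
  refine List.ext_getElem (by simp [window]) fun i hi _ => ?_
  simp only [List.length_ofFn] at hi
  simp [window, natExtend, List.getElem_range', hi]

theorem injOn_natExtend (hv : Function.Injective v) :
    Set.InjOn (natExtend v) (Set.Ico 0 n) :=
  fun i hi j hj h => by
    simpa using hv (by simpa [natExtend, hi.2, hj.2] using h : v ⟨i, hi.2⟩ = v ⟨j, hj.2⟩)

theorem sees_natExtend_iff (α β : Fin n) :
    Sees (natExtend v) α β ↔
      v α < v β ∧ ∀ t : Fin n, min α β < t → t < max α β → v t < v α := by
  simp only [Sees, natExtend_val]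
  refine and_congr_right fun _ => ⟨fun h t ht₁ ht₂ => ?_, fun h t ht₁ ht₂ => ?_⟩
  · simpa using h t ht₁ ht₂
  · have ht : t < n := by omega
    simpa [natExtend, ht] using h ⟨t, ht⟩ ht₁ ht₂

end NatExtend

theorem parent_characterization_general {n : ℕ} (σ : Equiv.Perm (Fin n))
    (α β : Fin n)
    (h1 : σ α < σ β)
    (h2 : ∀ t : Fin n, min α β < t → t < max α β → σ t < σ α)
    (h3 : ∀ β' : Fin n, σ α < σ β' →
      (∀ t : Fin n, min α β' < t → t < max α β' → σ t < σ α) → σ β ≤ σ β') :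
    IsParent (treeOfL σ) (σ β : ℕ) (σ α : ℕ) := by
  set v : Fin n → ℕ := fun i => σ i
  have hv : Function.Injective v := Fin.val_injective.comp σ.injective
  have hmin :
      ∀ β' ∈ Set.Ico 0 n, Sees (natExtend v) α β' → natExtend v β ≤ natExtend v β' :=
    fun β' hβ' hsees => by
      obtain ⟨hlt, hbetween⟩ := (sees_natExtend_iff v α ⟨β', hβ'.2⟩).1 hsees
      show natExtend v β ≤ natExtend v (⟨β', hβ'.2⟩ : Fin n)
      rw [natExtend_val, natExtend_val]
      exact h3 _ hlt hbetween
  have := isParent_toTreeL_window (injOn_natExtend v hv) ⟨Nat.zero_le _, α.isLt⟩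
    ⟨Nat.zero_le _, β.isLt⟩ ((sees_natExtend_iff v α β).2 ⟨h1, h2⟩) hmin
  rwa [natExtend_val, natExtend_val, ← ofFn_eq_window] at this

/-- parent characterization in `T(σ)`: for a non-maximal entry `σ_α`, its
parent is the least value `σ_β` greater than `σ_α` such that all entries strictly between
positions `β` and `α` are less than `σ_α`. -/
theorem parent_characterization {n : ℕ} (σ : Equiv.Perm (Fin n)) (hσ : Avoids132 σ)
    (α β : Fin n) (hα : (σ α : ℕ) < n - 1)
    (h1 : σ α < σ β)
    (h2 : ∀ t : Fin n, min α β < t → t < max α β → σ t < σ α)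
    (h3 : ∀ β' : Fin n, σ α < σ β' →
      (∀ t : Fin n, min α β' < t → t < max α β' → σ t < σ α) → σ β ≤ σ β') :
    IsParent (treeOfL σ) (σ β : ℕ) (σ α : ℕ) :=
  parent_characterization_general σ α β h1 h2 h3
end

section
/- For any two binary trees T_1, T_2 on n vertices such that the spine structure of T_2 is obtained from that of T_1 by merging two parts, there exists a 132-avoiding permutation σ of {1,…,n} and an index j such that φ = σ^{σ_j} is defined, T(σ) has the same spine structure as T_1, and T(φ) has the same spine structure as T_2. -/
lemma sum_map_add_one (K : List ℕ) : (K.map (· + 1)).sum = K.sum + K.length := by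
  simp [List.sum_map_add]

lemma exists_list_map_add_one_eq {S : Multiset ℕ} (hS : ∀ x ∈ S, x ≠ 0) :
    ∃ K : List ℕ, (K.map (· + 1) : Multiset ℕ) = S := by
  induction S using Multiset.induction_on with
  | empty => exact ⟨[], rfl⟩
  | cons a S ih =>
    obtain ⟨K, hK⟩ := ih fun x hx => hS x (Multiset.mem_cons_of_mem hx)
    obtain ⟨k, rfl⟩ := Nat.exists_eq_add_one_of_ne_zero (hS a (Multiset.mem_cons_self a S))
    exact ⟨k :: K, by simp [← hK]⟩

lemma foldr_max_mem {l : List ℕ} (h : l ≠ []) : l.foldr max 0 ∈ l :=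
  List.maximum_mem (List.foldr_max_of_ne_nil h).symm

@[simp] lemma toTree_nil : toTree [] = BinaryTree.nil := rfl

lemma toTreeAux_succ_of_ne_nil {l : List ℕ} (fuel : ℕ) (h : l ≠ []) :
    toTreeAux (fuel + 1) l =
      BinaryTree.node () (toTreeAux fuel (l.take (l.idxOf (l.foldr max 0))))
        (toTreeAux fuel (l.drop (l.idxOf (l.foldr max 0) + 1))) := by
  cases l
  · contradiction
  · rfl

lemma toTreeAux_congr_fuel {l : List ℕ} {f₁ f₂ : ℕ} (h₁ : l.length ≤ f₁)
    (h₂ : l.length ≤ f₂) :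
    toTreeAux f₁ l = toTreeAux f₂ l := by
  induction f₁ generalizing f₂ l with
  | zero => rw [List.eq_nil_of_length_eq_zero (Nat.le_zero.mp h₁)]; cases f₂ <;> rfl
  | succ g ih =>
    rcases eq_or_ne l [] with rfl | hl
    · cases f₂ <;> rfl
    obtain ⟨g₂, rfl⟩ : ∃ g₂, f₂ = g₂ + 1 :=
      Nat.exists_eq_add_one_of_ne_zero (by have := List.length_pos_iff.mpr hl; omega)
    have hm := List.idxOf_lt_length_iff.mpr (foldr_max_mem hl)
    rw [toTreeAux_succ_of_ne_nil g hl, toTreeAux_succ_of_ne_nil g₂ hl]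
    congr 1 <;> apply ih <;> simp only [List.length_take, List.length_drop] <;> omega

lemma toTree_append_cons {L D : List ℕ} {M : ℕ} (hL : ∀ x ∈ L, x < M)
    (hD : ∀ x ∈ D, x < M) :
    toTree (L ++ M :: D) = BinaryTree.node () (toTree L) (toTree D) := by
  have hmax : (L ++ M :: D).foldr max 0 = M := by
    refine le_antisymm (List.max_le_of_forall_le _ _ fun x hx => ?_)
      (List.le_max_of_le (by simp) le_rfl)
    simp only [List.mem_append, List.mem_cons] at hx
    rcases hx with hx | rfl | hx
    exacts [(hL x hx).le, le_rfl, (hD x hx).le]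
  have hidx : (L ++ M :: D).idxOf M = L.length := by
    rw [List.idxOf_append_of_notMem fun h => (hL M h).false, List.idxOf_cons_self, add_zero]
  have hlen : (L ++ M :: D).length = L.length + D.length + 1 := by
    simp only [List.length_append, List.length_cons]; omega
  have hdrop : (L ++ M :: D).drop (L.length + 1) = D := by simp
  rw [toTree, hlen, toTreeAux_succ_of_ne_nil _ (by simp), hmax, hidx, List.take_left, hdrop,
    toTreeAux_congr_fuel (f₂ := L.length) (by omega) le_rfl,
    toTreeAux_congr_fuel (f₂ := D.length) (by omega) le_rfl]
  rfl

lemma spineStructure_node {α : Type*} (v : α) (L R : BinaryTree α) :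
    spineStructure (BinaryTree.node v L R) =
      ((spineAux R).1 + 1) ::ₘ (spineStructure L + (spineAux R).2) := by
  simp [spineStructure, spineAux]

lemma spineAux_toTree_of_pairwise_gt {l : List ℕ} (hl : l.Pairwise (· > ·)) :
    spineAux (toTree l) = (l.length, 0) := by
  induction l with
  | nil => rfl
  | cons x l ih =>
    rw [List.pairwise_cons] at hl
    rw [← List.nil_append (x :: l), toTree_append_cons (by simp) hl.1]
    simp [spineAux, ih hl.2]

lemma spineAux_fst_add_sum {α : Type*} (t : BinaryTree α) :
    (spineAux t).1 + (spineAux t).2.sum = t.numNodes := by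
  induction t with
  | nil => rfl
  | node v L R ihL ihR =>
    simp only [spineAux, BinaryTree.numNodes]
    split_ifs <;> simp only [Multiset.sum_add, Multiset.sum_cons] <;> omega

lemma sum_spineStructure {α : Type*} (t : BinaryTree α) :
    (spineStructure t).sum = t.numNodes := by
  have := spineAux_fst_add_sum t
  simp only [spineStructure]
  split_ifs
  · omega
  · rw [Multiset.sum_cons, this]

lemma zero_notMem_spineAux_snd {α : Type*} (t : BinaryTree α) : 0 ∉ (spineAux t).2 := by
  induction t with
  | nil => simp [spineAux]
  | node v L R ihL ihR =>
    simp only [spineAux]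
    split_ifs with h
    · simp [ihL, ihR]
    · simp [ihL, ihR, Ne.symm h]

lemma zero_notMem_spineStructure {α : Type*} (t : BinaryTree α) : 0 ∉ spineStructure t := by
  simp only [spineStructure]
  split_ifs with h
  · exact zero_notMem_spineAux_snd t
  · simp [zero_notMem_spineAux_snd, Ne.symm h]

def ListAvoids132 (l : List ℕ) : Prop :=
  ∀ x y z : ℕ, [x, y, z].Sublist l → ¬ (x < z ∧ z < y)

lemma listAvoids132_of_pairwise_gt {l : List ℕ} (hl : l.Pairwise (· > ·)) :
    ListAvoids132 l := by
  intro x y z hs ⟨hxz, _⟩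
  have := hl.sublist hs
  simp only [List.pairwise_cons, List.mem_cons] at this
  exact (this.1 z (by simp)).asymm hxz

lemma ListAvoids132.append_cons {L D : List ℕ} {M : ℕ} (hL : ListAvoids132 L)
    (hD : ListAvoids132 D) (hLM : ∀ x ∈ L, x < M) (hDM : ∀ y ∈ D, y < M)
    (hDL : ∀ y ∈ D, ∀ x ∈ L, y < x) :
    ListAvoids132 (L ++ M :: D) := by
  have straddle : ∀ x ∈ L, ∀ y ∈ L ++ M :: D, ∀ z ∈ M :: D, ¬ (x < z ∧ z < y) := by
    intro x hx y hy z hz ⟨hxz, hzy⟩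
    rcases List.mem_cons.mp hz with rfl | hz
    · simp only [List.mem_append, List.mem_cons] at hy
      rcases hy with hy | rfl | hy
      exacts [(hLM y hy).asymm hzy, hzy.false, (hDM y hy).asymm hzy]
    · exact (hDL z hz x hx).asymm hxz
  intro x y z hs
  have hy : y ∈ L ++ M :: D := hs.subset (by simp)
  -- `l₁` is the part of the occurrence lying in `L`
  obtain ⟨l₁, l₂, he, h₁, h₂⟩ := List.sublist_append_iff.mp hs
  rcases l₁ with _ | ⟨_, _ | ⟨_, _ | ⟨_, _ | ⟨_, _⟩⟩⟩⟩ <;>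
    simp only [List.nil_append, List.cons_append, List.cons.injEq] at he
  · subst he
    rcases List.sublist_cons_iff.mp h₂ with h | ⟨r, hr, h⟩
    · exact hD x y z h
    · obtain ⟨rfl, rfl⟩ := List.cons_eq_cons.mp hr
      exact fun h' => (hDM z (h.subset (by simp))).asymm h'.1
  · obtain ⟨rfl, rfl⟩ := he
    exact straddle x (h₁.subset (by simp)) y hy z (h₂.subset (by simp))
  · obtain ⟨rfl, rfl, rfl⟩ := he
    exact straddle x (h₁.subset (by simp)) y hy z (h₂.subset (by simp))
  · obtain ⟨rfl, rfl, rfl, -⟩ := he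
    exact hL x y z h₁
  · simp at he

/-- `spineWord t K` is a word on the values `t, …, t + ∑ (k + 1) - 1` whose tree has the spines
`k + 1` for `k ∈ K`: the head of `K` gives the root spine, each later part the spine through the
left child of the previous spine's top vertex. -/
def spineWord (t : ℕ) : List ℕ → List ℕ
  | [] => []
  | k :: K => spineWord (t + k) K ++ (t + k + (K.sum + K.length)) :: (List.range' t k).reverse

lemma pairwise_gt_reverse_range' (t k : ℕ) : (List.range' t k).reverse.Pairwise (· > ·) :=
  List.pairwise_reverse.mpr (List.pairwise_lt_range' _)

lemma spineWord_perm (K : List ℕ) (t : ℕ) :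
    (spineWord t K).Perm (List.range' t (K.sum + K.length)) := by
  induction K generalizing t with
  | nil => rfl
  | cons k K ih =>
    calc (spineWord (t + k) K ++ (t + k + (K.sum + K.length)) :: (List.range' t k).reverse).Perm
          (List.range' (t + k) (K.sum + K.length) ++ (t + k + (K.sum + K.length)) ::
            List.range' t k) :=
          (ih (t + k)).append ((List.reverse_perm _).cons _)
      _ = List.range' (t + k) (K.sum + K.length + 1) ++ List.range' t k := by
          simp [List.range'_concat]
      List.Perm _ (List.range' t k ++ List.range' (t + k) (K.sum + K.length + 1)) :=
          List.perm_append_comm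
      _ = List.range' t ((k :: K).sum + (k :: K).length) := by
          simp only [List.range'_append_1, List.sum_cons, List.length_cons]; ring_nf

lemma mem_spineWord {K : List ℕ} {t x : ℕ} (hx : x ∈ spineWord t K) :
    t ≤ x ∧ x < t + (K.sum + K.length) :=
  List.mem_range'_1.mp ((spineWord_perm K t).mem_iff.mp hx)

lemma listAvoids132_spineWord (K : List ℕ) (t : ℕ) : ListAvoids132 (spineWord t K) := by
  induction K generalizing t with
  | nil => intro x y z h; simp [spineWord] at h
  | cons k K ih =>
    refine (ih (t + k)).append_cons (listAvoids132_of_pairwise_gt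
      (pairwise_gt_reverse_range' t k)) ?_ ?_ ?_
    · intro x hx; have := mem_spineWord hx; omega
    · intro y hy; simp only [List.mem_reverse, List.mem_range'_1] at hy; omega
    · intro y hy x hx
      have := mem_spineWord hx
      simp only [List.mem_reverse, List.mem_range'_1] at hy; omega

lemma spineStructure_toTree_spineWord (K : List ℕ) (t : ℕ) :
    spineStructure (toTree (spineWord t K)) = ↑(K.map (· + 1)) := by
  induction K generalizing t with
  | nil => rfl
  | cons k K ih =>
    rw [spineWord, toTree_append_cons (fun x hx => by have := mem_spineWord hx; omega)
        (fun x hx => by simp only [List.mem_reverse, List.mem_range'_1] at hx; omega),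
      spineStructure_node, ih,
      spineAux_toTree_of_pairwise_gt (pairwise_gt_reverse_range' t k)]
    simp

lemma exists_spineWord_append_eq_append (t : ℕ) (K : List ℕ) {K₁ K₂ : List ℕ}
    (h : K₁.sum + K₁.length = K₂.sum + K₂.length) :
    ∃ Z, spineWord t (K ++ K₁) = spineWord (t + K.sum) K₁ ++ Z ∧
      spineWord t (K ++ K₂) = spineWord (t + K.sum) K₂ ++ Z := by
  induction K generalizing t with
  | nil => exact ⟨[], by simp⟩
  | cons k K ih =>
    obtain ⟨Z, h₁, h₂⟩ := ih (t + k)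
    refine ⟨Z ++ (t + k + ((K ++ K₁).sum + (K ++ K₁).length)) :: (List.range' t k).reverse,
      ?_, ?_⟩
    · simp only [List.cons_append, spineWord, h₁, List.sum_cons, add_assoc, List.append_assoc]
    · have : (K ++ K₂).sum + (K ++ K₂).length = (K ++ K₁).sum + (K ++ K₁).length := by
        simp only [List.sum_append, List.length_append]; omega
      simp only [List.cons_append, spineWord, h₂, this, List.sum_cons, add_assoc,
        List.append_assoc]

section permOfList

variable {n : ℕ} {l : List ℕ}

lemma length_eq_of_perm_range (h : l.Perm (List.range n)) : l.length = n := by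
  simpa using h.length_eq

noncomputable def permOfList (l : List ℕ) (h : l.Perm (List.range n)) : Equiv.Perm (Fin n) :=
  Equiv.ofBijective
    (fun i => ⟨l[i.val]'(by rw [length_eq_of_perm_range h]; exact i.isLt),
      List.mem_range.mp (h.mem_iff.mp (List.getElem_mem _))⟩)
    (Finite.injective_iff_bijective.mp fun i j hij =>
      Fin.ext (((h.nodup_iff.mpr List.nodup_range).getElem_inj_iff).mp (Fin.val_eq_of_eq hij)))

lemma permOfList_apply (h : l.Perm (List.range n)) (i : Fin n) :
    (permOfList l h i : ℕ) = l[i.val]'(by rw [length_eq_of_perm_range h]; exact i.isLt) :=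
  rfl

lemma treeOf_permOfList (h : l.Perm (List.range n)) : treeOf (permOfList l h) = toTree l := by
  obtain rfl := length_eq_of_perm_range h
  exact congrArg toTree List.ofFn_getElem

lemma avoids132_permOfList (h : l.Perm (List.range n)) (hl : ListAvoids132 l) :
    Avoids132 (permOfList l h) := by
  obtain rfl := length_eq_of_perm_range h
  rintro ⟨a, b, c, hab, hbc, hac, hcb⟩
  have hmono : StrictMono ![a, b, c] := by
    refine Fin.strictMono_iff_lt_succ.mpr fun i => ?_
    fin_cases i
    exacts [hab, hbc]
  refine hl _ _ _ (List.sublist_iff_exists_fin_orderEmbedding_get_eq.mpr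
    ⟨OrderEmbedding.ofStrictMono _ hmono, fun i => ?_⟩) ⟨hac, hcb⟩
  fin_cases i <;> rfl

end permOfList

lemma exists_isShift_permOfList {n : ℕ} {l l' R Z : List ℕ} {r M : ℕ}
    (h : l.Perm (List.range n)) (h' : l'.Perm (List.range n))
    (hl : l = r :: R ++ M :: Z) (hl' : l' = M :: r :: R ++ Z)
    (hR : ∀ x ∈ R, x < r) (hrM : r < M) :
    ∃ i j, IsShift (permOfList l h) (permOfList l' h') i j := by
  have hn : n = R.length + Z.length + 2 := by
    rw [← length_eq_of_perm_range h, hl]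
    simp only [List.length_append, List.length_cons]; omega
  subst hl hl'
  refine ⟨⟨0, by omega⟩, ⟨R.length + 1, by omega⟩, ⟨?_, ?_, ?_, ?_⟩, ?_, ?_, ?_, ?_⟩
  · exact Fin.mk_lt_mk.mpr R.length.succ_pos
  · simpa [Fin.lt_def, permOfList_apply] using hrM
  · exact fun a ha => absurd (Fin.lt_def.mp ha) (Nat.not_lt_zero _)
  · rintro ⟨_ | b, hb⟩ hb₁ hb₂
    · exact absurd hb₁ (lt_irrefl _)
    · have hbR : b < R.length := by have := Fin.mk_lt_mk.mp hb₂; omega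
      rw [Fin.lt_def, permOfList_apply, permOfList_apply]
      simp only [List.cons_append, List.getElem_cons_succ, List.getElem_cons_zero,
        List.getElem_append_left hbR]
      exact hR _ (List.getElem_mem _)
  · exact fun t ht => absurd (Fin.lt_def.mp ht) (Nat.not_lt_zero _)
  · ext; simp [permOfList_apply]
  · rintro ⟨_ | t, ht⟩ - htj
    · rfl
    · have htR : t < R.length := by have := Fin.mk_lt_mk.mp htj; omega
      ext
      simp only [permOfList_apply, List.cons_append, List.getElem_cons_succ,
        List.getElem_append_left htR]
  · rintro ⟨t, ht⟩ htj
    obtain ⟨s, rfl⟩ : ∃ s, t = R.length + 2 + s := ⟨t - (R.length + 2), by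
      have := Fin.mk_lt_mk.mp htj; omega⟩
    ext
    simp only [permOfList_apply]
    grind

lemma spineWord_perm_range {n : ℕ} {K : List ℕ} (hn : n = K.sum + K.length) :
    (spineWord 0 K).Perm (List.range n) := by
  simpa [hn, List.range_eq_range'] using spineWord_perm K 0

lemma exists_spineWord_merge_eq (K : List ℕ) (ka kb : ℕ) :
    ∃ Z, spineWord 0 (K ++ [kb, ka]) =
        (K.sum + kb + ka) :: (List.range' (K.sum + kb) ka).reverse ++ (K.sum + kb + ka + 1) :: Z ∧
      spineWord 0 (K ++ [ka + kb + 1]) =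
        (K.sum + kb + ka + 1) :: (K.sum + kb + ka) :: (List.range' (K.sum + kb) ka).reverse ++
          Z := by
  obtain ⟨Z, hσ, hφ⟩ := exists_spineWord_append_eq_append 0 K (K₁ := [kb, ka])
    (K₂ := [ka + kb + 1]) (by grind)
  refine ⟨(List.range' K.sum kb).reverse ++ Z, ?_, ?_⟩
  · rw [hσ]; simp [spineWord, add_assoc]
  · have hrun : (List.range' K.sum (ka + kb + 1)).reverse = (K.sum + kb + ka) ::
        (List.range' (K.sum + kb) ka).reverse ++ (List.range' K.sum kb).reverse := by
      rw [show ka + kb + 1 = kb + ka + 1 by omega, List.range'_concat, ← List.range'_append_1]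
      simp [add_assoc]
    rw [hφ, ← List.append_assoc, List.cons_append, ← hrun]
    simp [spineWord, add_assoc, add_comm, add_left_comm]

theorem exists_shift_merging_innermost_spines {n : ℕ} (K : List ℕ) (ka kb : ℕ)
    (hn : n = K.sum + K.length + (ka + kb + 2)) :
    ∃ (σ φ : Equiv.Perm (Fin n)) (i j : Fin n),
      Avoids132 σ ∧ IsShift σ φ i j ∧
      spineStructure (treeOf σ) = (ka + 1) ::ₘ (kb + 1) ::ₘ ↑(K.map (· + 1)) ∧
      spineStructure (treeOf φ) = (ka + 1 + (kb + 1)) ::ₘ ↑(K.map (· + 1)) := by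
  have hperm : ∀ K' : List ℕ, K'.sum + K'.length = ka + kb + 2 →
      (spineWord 0 (K ++ K')).Perm (List.range n) := fun K' hK' =>
    spineWord_perm_range (by rw [List.sum_append, List.length_append]; omega)
  have hpσ := hperm [kb, ka] (by grind)
  have hpφ := hperm [ka + kb + 1] (by grind)
  obtain ⟨Z, hwσ, hwφ⟩ := exists_spineWord_merge_eq K ka kb
  obtain ⟨i, j, hij⟩ := exists_isShift_permOfList hpσ hpφ hwσ hwφ
    (fun x hx => by simp only [List.mem_reverse, List.mem_range'_1] at hx; omega) (by omega)
  refine ⟨_, _, i, j, avoids132_permOfList hpσ (listAvoids132_spineWord _ 0), hij, ?_, ?_⟩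
  · rw [treeOf_permOfList, spineStructure_toTree_spineWord]
    simpa using List.perm_append_comm.trans (List.Perm.swap (ka + 1) (kb + 1) _)
  · rw [treeOf_permOfList, spineStructure_toTree_spineWord,
      show ka + 1 + (kb + 1) = ka + kb + 1 + 1 by omega]
    simp

theorem merge_realized_by_shift_general {n : ℕ} (T₁ T₂ : Tree Unit)
    (h₁ : T₁.numNodes = n)
    (hm : ∃ (S : Multiset ℕ) (a b : ℕ),
      spineStructure T₁ = a ::ₘ b ::ₘ S ∧ spineStructure T₂ = (a + b) ::ₘ S) :
    ∃ (σ φ : Equiv.Perm (Fin n)) (i j : Fin n),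
      Avoids132 σ ∧ IsShift σ φ i j ∧
      spineStructure (treeOf σ) = spineStructure T₁ ∧
      spineStructure (treeOf φ) = spineStructure T₂ := by
  obtain ⟨S, a, b, hT₁, hT₂⟩ := hm
  have hpos : ∀ x ∈ spineStructure T₁, x ≠ 0 := fun x hx h =>
    zero_notMem_spineStructure T₁ (h ▸ hx)
  obtain ⟨K, rfl⟩ := exists_list_map_add_one_eq (S := S) fun x hx =>
    hpos x (by simp [hT₁, hx])
  obtain ⟨ka, rfl⟩ := Nat.exists_eq_add_one_of_ne_zero (hpos a (by simp [hT₁]))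
  obtain ⟨kb, rfl⟩ := Nat.exists_eq_add_one_of_ne_zero (hpos b (by simp [hT₁]))
  have hn : n = K.sum + K.length + (ka + kb + 2) := by
    have hsum : (spineStructure T₁).sum = n := (sum_spineStructure T₁).trans h₁
    rw [hT₁, Multiset.sum_cons, Multiset.sum_cons, Multiset.sum_coe, sum_map_add_one] at hsum
    omega
  rw [hT₁, hT₂]
  exact exists_shift_merging_innermost_spines K ka kb hn

/-- any merging of two parts of a spine structure is realized by a shift
move on some 132-avoiding permutation. -/
theorem merge_realized_by_shift {n : ℕ} (T₁ T₂ : Tree Unit)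
    (h₁ : T₁.numNodes = n) (h₂ : T₂.numNodes = n)
    (hm : ∃ (S : Multiset ℕ) (a b : ℕ),
      spineStructure T₁ = a ::ₘ b ::ₘ S ∧ spineStructure T₂ = (a + b) ::ₘ S) :
    ∃ (σ φ : Equiv.Perm (Fin n)) (i j : Fin n),
      Avoids132 σ ∧ IsShift σ φ i j ∧
      spineStructure (treeOf σ) = spineStructure T₁ ∧
      spineStructure (treeOf φ) = spineStructure T₂ :=
  merge_realized_by_shift_general T₁ T₂ h₁ hm
end
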